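/- arXiv:2412.05639 — 4 statements merged into one kernel-verified Lean document; each statement's English description precedes it below -/
import Mathlib

section
/- Let φ ∈ C(X) and let F be a nonempty subset of M_T(X). Then the following are equivalent: (i) for every β ≥ 1, F is exactly the set of all equilibrium states for βφ; (ii) F is exactly the set of all equilibrium states for φ, and every μ ∈ F satisfies ∫ φ dμ = sup { ∫ φ dν : ν ∈ M_T(X) }. -/
open MeasureTheory Filter Set
open scoped NNReal ENNReal

variable {X : Type*} [MetricSpace X] [CompactSpace X] [Nonempty X]
  [MeasurableSpace X] [BorelSpace X]

/-- The set `M_T(X)` of `T`-invariant Borel probability measures on `X`,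
equipped (as a subset of `ProbabilityMeasure X`) with the weak-* topology. -/
def InvMeas (T : X → X) : Set (ProbabilityMeasure X) :=
  {μ | (μ : Measure X).map T = (μ : Measure X)}

/-- The pressure `P(φ) = sup { h(μ) + ∫ φ dμ : μ ∈ M_T(X) }`. -/
noncomputable def press (T : X → X) (h : ProbabilityMeasure X → ℝ) (φ : C(X, ℝ)) : ℝ :=
  sSup ((fun μ : ProbabilityMeasure X => h μ + ∫ x, φ x ∂(μ : Measure X)) '' InvMeas T)

/-- `μ` is an equilibrium state for `φ`: `μ ∈ M_T(X)` and `h(μ) + ∫ φ dμ = P(φ)`. -/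
def IsEquilib (T : X → X) (h : ProbabilityMeasure X → ℝ) (φ : C(X, ℝ))
    (μ : ProbabilityMeasure X) : Prop :=
  μ ∈ InvMeas T ∧ h μ + ∫ x, φ x ∂(μ : Measure X) = press T h φ

/-- `Max(φ) = sup { ∫ φ dν : ν ∈ M_T(X) }`. -/
noncomputable def MaxInt (T : X → X) (φ : C(X, ℝ)) : ℝ :=
  sSup ((fun μ : ProbabilityMeasure X => ∫ x, φ x ∂(μ : Measure X)) '' InvMeas T)

/-- `h_∞(φ) = sup { h(μ) : μ ∈ M_T(X), ∫ φ dμ = Max(φ) }`. -/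
noncomputable def hInfty (T : X → X) (h : ProbabilityMeasure X → ℝ) (φ : C(X, ℝ)) : ℝ :=
  sSup (h '' {μ ∈ InvMeas T | ∫ x, φ x ∂(μ : Measure X) = MaxInt T φ})

/-!
If `μ` is an equilibrium state for `βφ` for every `β ≥ 1`, then comparing `μ` with any invariant
`ν` gives `h ν + β ∫ φ dν ≤ h μ + β ∫ φ dμ` for all `β ≥ 1`, which forces `∫ φ dν ≤ ∫ φ dμ`; so `μ`
maximizes `∫ φ`. Conversely, if some equilibrium state `μ` for `φ` maximizes `∫ φ`, then
`h + β ∫ φ = (h + ∫ φ) + (β - 1) ∫ φ` is a sum of two terms each maximized by `μ`, so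
`P(βφ) = P(φ) + (β - 1) Max(φ)` and the equilibrium states for `βφ` are exactly the equilibrium
states for `φ` that maximize `∫ φ`.
-/

lemma le_of_forall_one_le_add_mul_le {a b x y : ℝ}
    (H : ∀ β : ℝ, 1 ≤ β → a + β * x ≤ b + β * y) : x ≤ y := by
  by_contra! hyx
  set β := max 1 ((b - a + 1) / (x - y))
  have hβ : b - a + 1 ≤ β * (x - y) := (div_le_iff₀ (sub_pos.2 hyx)).1 (le_max_right _ _)
  linarith [H β (le_max_left _ _)]

lemma ContinuousMap.integral_le_norm {Y : Type*} [TopologicalSpace Y] [CompactSpace Y]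
    [MeasurableSpace Y] (φ : C(Y, ℝ)) (μ : Measure Y) [IsProbabilityMeasure μ] :
    ∫ x, φ x ∂μ ≤ ‖φ‖ := by
  have := norm_integral_le_of_norm_le_const (μ := μ) (ae_of_all _ φ.norm_coe_le_norm)
  simpa using (le_abs_self _).trans this

lemma ContinuousMap.integral_smul_apply {Y : Type*} [TopologicalSpace Y] [MeasurableSpace Y]
    (β : ℝ) (φ : C(Y, ℝ)) (μ : Measure Y) :
    ∫ x, (β • φ) x ∂μ = β * ∫ x, φ x ∂μ :=
  integral_const_mul β _

section

variable {X : Type*} [MetricSpace X] [MeasurableSpace X] {T : X → X}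
  {h : ProbabilityMeasure X → ℝ} {φ : C(X, ℝ)} {μ ν : ProbabilityMeasure X}

lemma maxInt_le_of_forall_integral_le (hμ : μ ∈ InvMeas T)
    (H : ∀ ν ∈ InvMeas T, ∫ x, φ x ∂(ν : Measure X) ≤ ∫ x, φ x ∂(μ : Measure X)) :
    MaxInt T φ ≤ ∫ x, φ x ∂(μ : Measure X) := by
  refine csSup_le ⟨_, mem_image_of_mem _ hμ⟩ ?_
  rintro _ ⟨ν, hν, rfl⟩
  exact H ν hν

variable [CompactSpace X]

lemma integral_le_maxInt (hν : ν ∈ InvMeas T) : ∫ x, φ x ∂(ν : Measure X) ≤ MaxInt T φ := by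
  refine le_csSup ⟨‖φ‖, ?_⟩ (mem_image_of_mem _ hν)
  rintro _ ⟨μ, -, rfl⟩
  exact φ.integral_le_norm μ

variable (hh : BddAbove (h '' InvMeas T))
include hh

lemma le_press (hν : ν ∈ InvMeas T) :
    h ν + ∫ x, φ x ∂(ν : Measure X) ≤ press T h φ := by
  obtain ⟨C, hC⟩ := hh
  refine le_csSup ⟨C + ‖φ‖, ?_⟩ (mem_image_of_mem _ hν)
  rintro _ ⟨μ, hμ, rfl⟩
  exact add_le_add (hC (mem_image_of_mem h hμ)) (φ.integral_le_norm μ)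

lemma integral_eq_maxInt_of_forall_isEquilib_smul
    (hμ : ∀ β : ℝ, 1 ≤ β → IsEquilib T h (β • φ) μ) :
    ∫ x, φ x ∂(μ : Measure X) = MaxInt T φ := by
  have hμT : μ ∈ InvMeas T := (hμ 1 le_rfl).1
  refine le_antisymm (integral_le_maxInt hμT) (maxInt_le_of_forall_integral_le hμT fun ν hν => ?_)
  refine le_of_forall_one_le_add_mul_le (a := h ν) (b := h μ) fun β hβ => ?_
  have hν_le := le_press hh (φ := β • φ) hν
  rwa [← (hμ β hβ).2, ContinuousMap.integral_smul_apply, ContinuousMap.integral_smul_apply] at hν_le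

section

variable {β : ℝ} (hβ : 1 ≤ β) (hμ : IsEquilib T h φ μ)
  (hμmax : ∫ x, φ x ∂(μ : Measure X) = MaxInt T φ)
include hβ hμ hμmax

lemma press_smul_of_isEquilib_of_integral_eq_maxInt :
    press T h (β • φ) = press T h φ + (β - 1) * MaxInt T φ := by
  refine le_antisymm ?_ ?_
  · refine csSup_le ⟨_, mem_image_of_mem _ hμ.1⟩ ?_
    rintro _ ⟨ν, hν, rfl⟩
    have hP := le_press hh (φ := φ) hν
    have hM := mul_le_mul_of_nonneg_left (integral_le_maxInt (φ := φ) hν) (sub_nonneg.2 hβ)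
    simp only [ContinuousMap.integral_smul_apply]
    linarith
  · calc press T h φ + (β - 1) * MaxInt T φ
        = h μ + ∫ x, (β • φ) x ∂(μ : Measure X) := by
          rw [ContinuousMap.integral_smul_apply, ← hμ.2, hμmax]; ring
      _ ≤ press T h (β • φ) := le_press hh hμ.1

lemma IsEquilib.smul_of_integral_eq_maxInt : IsEquilib T h (β • φ) μ := by
  refine ⟨hμ.1, ?_⟩
  rw [press_smul_of_isEquilib_of_integral_eq_maxInt hh hβ hμ hμmax,
    ContinuousMap.integral_smul_apply, ← hμ.2, hμmax]
  ring

lemma IsEquilib.of_smul (hν : IsEquilib T h (β • φ) ν) : IsEquilib T h φ ν := by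
  refine ⟨hν.1, le_antisymm (le_press hh hν.1) ?_⟩
  have hE := hν.2
  rw [press_smul_of_isEquilib_of_integral_eq_maxInt hh hβ hμ hμmax,
    ContinuousMap.integral_smul_apply] at hE
  have hM := mul_le_mul_of_nonneg_left (integral_le_maxInt (φ := φ) hν.1) (sub_nonneg.2 hβ)
  linarith

end

end

theorem stmt0_general
    (T : X → X)
    (h : ProbabilityMeasure X → ℝ)
    (hbd : ∃ C : ℝ, ∀ μ ∈ InvMeas T, |h μ| ≤ C)
    (φ : C(X, ℝ)) (F : Set (ProbabilityMeasure X)) (hFne : F.Nonempty) :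
    (∀ β : ℝ, 1 ≤ β → F = {μ | IsEquilib T h (β • φ) μ}) ↔
      (F = {μ | IsEquilib T h φ μ} ∧
        ∀ μ ∈ F, ∫ x, φ x ∂(μ : Measure X) = MaxInt T φ) := by
  obtain ⟨C, hC⟩ := hbd
  have hh : BddAbove (h '' InvMeas T) := by
    refine ⟨C, ?_⟩
    rintro _ ⟨μ, hμ, rfl⟩
    exact (abs_le.1 (hC μ hμ)).2
  constructor
  · intro H
    have hF : F = {μ | IsEquilib T h φ μ} := by simpa using H 1 le_rfl
    refine ⟨hF, fun μ hμ => integral_eq_maxInt_of_forall_isEquilib_smul hh fun β hβ =>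
      (H β hβ).subset hμ⟩
  · rintro ⟨hF, hmax⟩ β hβ
    obtain ⟨μ, hμF⟩ := hFne
    have hμ : IsEquilib T h φ μ := hF.subset hμF
    ext ν
    constructor
    · intro hνF
      exact IsEquilib.smul_of_integral_eq_maxInt hh hβ (hF.subset hνF) (hmax ν hνF)
    · intro hν
      rw [hF]
      exact IsEquilib.of_smul hh hβ hμ (hmax μ hμF) hν

theorem stmt0
    (T : X → X) (hT : Continuous T) (hne : (InvMeas T).Nonempty)
    (h : ProbabilityMeasure X → ℝ)
    (hbd : ∃ C : ℝ, ∀ μ ∈ InvMeas T, |h μ| ≤ C)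
    (haff : ∀ μ ν : ProbabilityMeasure X, μ ∈ InvMeas T → ν ∈ InvMeas T →
      ∀ t : ℝ, 0 ≤ t → t ≤ 1 → ∀ σ : ProbabilityMeasure X,
        (σ : Measure X) =
          ENNReal.ofReal t • (μ : Measure X) + ENNReal.ofReal (1 - t) • (ν : Measure X) →
        h σ = t * h μ + (1 - t) * h ν)
    (φ : C(X, ℝ)) (F : Set (ProbabilityMeasure X)) (hFne : F.Nonempty)
    (hFM : F ⊆ InvMeas T) :
    (∀ β : ℝ, 1 ≤ β → F = {μ | IsEquilib T h (β • φ) μ}) ↔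
      (F = {μ | IsEquilib T h φ μ} ∧
        ∀ μ ∈ F, ∫ x, φ x ∂(μ : Measure X) = MaxInt T φ) :=
  stmt0_general T h hbd φ F hFne
end

section
/- Let μ ∈ M_T(X) be ergodic. Then there exists φ ∈ C(X) such that μ is the unique equilibrium state for φ, if and only if there exists ψ ∈ C(X) such that for every β ≥ 1, μ is the unique equilibrium state for βψ (i.e., μ is the freezing state of some potential). -/
/-!
Let `φ` have `μ` as its unique equilibrium state and put `c = ∫ φ dμ`. Write `φ - c = A - B`
with `A, B ≥ 0` its positive and negative parts, so that `∫ A dμ = ∫ B dμ`. By the `L²` mean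
ergodic theorem and ergodicity, Birkhoff averages `vA`, `vB` of `A`, `B` are `L¹(μ)`-close to the
constant `∫ A dμ`, and they have the same integrals as `A`, `B` against every invariant measure.
Thus `r = min vA vB (∫ A dμ)` is a common part of `A` and `B` (in the sense of invariant
integrals) which leaves only a small remainder of `∫ A dμ`. Iterating with geometrically small
errors and summing the (uniformly convergent) common parts gives a continuous `R` with
`∫ R dν ≤ min (∫ A dν) (∫ B dν)` for all invariant `ν` and `∫ R dμ = ∫ A dμ`.
Then `ψ = φ + R - A` satisfies `∫ ψ dν ≤ ∫ φ dν` and `∫ ψ dν ≤ c = ∫ ψ dμ`, hence for `β ≥ 1`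
`h ν + β ∫ ψ dν ≤ h ν + ∫ φ dν + (β - 1) c < h μ + β c` whenever `ν ≠ μ`.
The converse is the case `β = 1`.
-/

open MeasureTheory Filter Set
open scoped NNReal ENNReal

variable {X : Type*} [MetricSpace X] [CompactSpace X] [Nonempty X]
  [MeasurableSpace X] [BorelSpace X]

open scoped Topology

theorem sub_min_min_le_abs_add_abs (a b d : ℝ) : a - min (min a b) d ≤ |a - d| + |b - d| := by
  rcases min_cases (min a b) d with ⟨h, -⟩ | ⟨h, -⟩ <;> rw [h]
  · rcases min_cases a b with ⟨h', -⟩ | ⟨h', -⟩ <;> rw [h']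
    · rw [sub_self]; positivity
    · linarith [abs_sub_abs_le_abs_sub a d, le_abs_self (a - d), neg_abs_le (b - d)]
  · linarith [le_abs_self (a - d), abs_nonneg (b - d)]

theorem HasSum.tendsto_of_succ_eq_sub {G : Type*} [TopologicalSpace G] [AddCommGroup G]
    [IsTopologicalAddGroup G] {x y : ℕ → G} {s : G} (hy : HasSum y s)
    (h : ∀ n, x (n + 1) = x n - y n) : Tendsto x atTop (𝓝 (x 0 - s)) := by
  have hsum : ∀ n, ∑ k ∈ Finset.range n, y k = x 0 - x n := fun n => by
    rw [← Finset.sum_range_sub']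
    exact Finset.sum_congr rfl fun k _ => by rw [h]; abel
  simpa [hsum] using tendsto_const_nhds.sub hy.tendsto_sum_nat (a := x 0)

theorem Function.Semiconj.map_birkhoffAverage {R M N F : Type*} [DivisionSemiring R]
    [AddCommMonoid M] [Module R M] [AddCommMonoid N] [Module R N] [FunLike F M N]
    [AddMonoidHomClass F M N] {π : F} {f : M → M} {g : N → N} (h : Function.Semiconj π f g)
    (n : ℕ) (x : M) :
    π (birkhoffAverage R f id n x) = birkhoffAverage R g id n (π x) := by
  rw [_root_.map_birkhoffAverage R R]
  simp only [birkhoffAverage, birkhoffSum, Function.comp_apply, id, (h.iterate_right _).eq]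

namespace MeasureTheory

variable {α : Type*} [MeasurableSpace α] {μ : Measure α}

theorem integral_abs_sub_integral_le [IsProbabilityMeasure μ] {f : α → ℝ}
    (hf : Integrable f μ) (c : ℝ) :
    ∫ x, |f x - ∫ y, f y ∂μ| ∂μ ≤ 2 * ∫ x, |f x - c| ∂μ := by
  have hfc : Integrable (fun x => |f x - c|) μ := (hf.sub (integrable_const c)).abs
  have hmean : |c - ∫ y, f y ∂μ| ≤ ∫ x, |f x - c| ∂μ := by
    have : ∫ x, (f x - c) ∂μ = ∫ y, f y ∂μ - c := by
      rw [integral_sub hf (integrable_const c)]; simp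
    rw [abs_sub_comm, ← this]
    exact abs_integral_le_integral_abs
  calc ∫ x, |f x - ∫ y, f y ∂μ| ∂μ
        ≤ ∫ x, (|f x - c| + |c - ∫ y, f y ∂μ|) ∂μ :=
        integral_mono (hf.sub (integrable_const _)).abs (hfc.add (integrable_const _))
          fun x => abs_sub_le _ _ _
    _ = ∫ x, |f x - c| ∂μ + |c - ∫ y, f y ∂μ| := by
        rw [integral_add hfc (integrable_const _), integral_const, probReal_univ, one_smul]
    _ ≤ 2 * ∫ x, |f x - c| ∂μ := by linarith

variable {E : Type*} [NormedAddCommGroup E] [NormedSpace ℝ E]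

theorem MeasurePreserving.integral_comp_of_aestronglyMeasurable {β : Type*} [MeasurableSpace β]
    {ν : Measure β} {T : α → β} (hT : MeasurePreserving T μ ν) {g : β → E}
    (hg : AEStronglyMeasurable g ν) : ∫ x, g (T x) ∂μ = ∫ y, g y ∂ν := by
  rw [← integral_map hT.aemeasurable (by rwa [hT.map_eq]), hT.map_eq]

theorem MeasurePreserving.integral_birkhoffAverage {T : α → α} (hT : MeasurePreserving T μ μ)
    {g : α → E} (hg : Integrable g μ) {n : ℕ} (hn : n ≠ 0) :
    ∫ x, birkhoffAverage ℝ T g n x ∂μ = ∫ x, g x ∂μ := by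
  have hcomp : ∀ k, ∫ x, g (T^[k] x) ∂μ = ∫ x, g x ∂μ := fun k =>
    (hT.iterate k).integral_comp_of_aestronglyMeasurable hg.aestronglyMeasurable
  simp only [birkhoffAverage, birkhoffSum]
  rw [integral_smul, integral_finsetSum (f := fun k x => g (T^[k] x)) _ fun k _ =>
    ((hT.iterate k).integrable_comp hg.aestronglyMeasurable).2 hg]
  rw [Finset.sum_congr rfl fun k _ => hcomp k, Finset.sum_const, Finset.card_range,
    ← Nat.cast_smul_eq_nsmul ℝ, inv_smul_smul₀ (Nat.cast_ne_zero.2 hn)]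

theorem Lp.integral_norm_le_norm_two [IsProbabilityMeasure μ] {F : Type*}
    [NormedAddCommGroup F] (f : Lp F 2 μ) : ∫ x, ‖f x‖ ∂μ ≤ ‖f‖ := by
  rw [integral_norm_eq_lintegral_enorm (Lp.aestronglyMeasurable f),
    ← eLpNorm_one_eq_lintegral_enorm, Lp.norm_def]
  exact ENNReal.toReal_mono (Lp.eLpNorm_ne_top f)
    (eLpNorm_le_eLpNorm_of_exponent_le one_le_two (Lp.aestronglyMeasurable f))

end MeasureTheory

namespace ContinuousMap

theorem birkhoffAverage_comp_apply {Y : Type*} [TopologicalSpace Y] {T : Y → Y}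
    (hT : Continuous T) (f : C(Y, ℝ)) (n : ℕ) (x : Y) :
    birkhoffAverage ℝ (fun g : C(Y, ℝ) => g.comp ⟨T, hT⟩) id n f x =
      birkhoffAverage ℝ T f n x := by
  have hiter : ∀ k (g : C(Y, ℝ)),
      ((fun g : C(Y, ℝ) => g.comp ⟨T, hT⟩)^[k] g) x = g (T^[k] x) := by
    intro k
    induction k with
    | zero => simp
    | succ k ih =>
      intro g
      rw [Function.iterate_succ_apply, ih, Function.iterate_succ_apply']
      rfl
  simp [birkhoffAverage, birkhoffSum, hiter]

variable {Y : Type*} [TopologicalSpace Y] [CompactSpace Y] [MeasurableSpace Y] [BorelSpace Y]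

theorem integrable (μ : Measure Y) [IsFiniteMeasure μ] (f : C(Y, ℝ)) : Integrable f μ :=
  (f.memLp (p := 1) (μ := μ) ℝ).integrable le_rfl

noncomputable def integralCLM (μ : Measure Y) [IsFiniteMeasure μ] : C(Y, ℝ) →L[ℝ] ℝ :=
  L1.integralCLM.comp (toLp 1 μ ℝ)

@[simp]
theorem integralCLM_apply (μ : Measure Y) [IsFiniteMeasure μ] (f : C(Y, ℝ)) :
    integralCLM μ f = ∫ x, f x ∂μ := by
  rw [integralCLM, ContinuousLinearMap.comp_apply, ← L1.integral_def, L1.integral_eq_integral]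
  exact integral_congr_ae (coeFn_toLp (p := 1) (𝕜 := ℝ) μ f)

theorem hasSum_integral {r : ℕ → C(Y, ℝ)} {R : C(Y, ℝ)} (hR : HasSum r R) (μ : Measure Y)
    [IsFiniteMeasure μ] : HasSum (fun n => ∫ x, r n x ∂μ) (∫ x, R x ∂μ) := by
  simpa [Function.comp_def] using hR.map (integralCLM μ) (integralCLM μ).continuous

theorem integral_le_norm_s2 (μ : Measure Y) [IsProbabilityMeasure μ] (f : C(Y, ℝ)) :
    ∫ x, f x ∂μ ≤ ‖f‖ :=
  calc ∫ x, f x ∂μ ≤ ∫ _, ‖f‖ ∂μ :=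
        integral_mono (f.integrable μ) (integrable_const _)
          fun x => (le_abs_self _).trans (f.norm_coe_le_norm x)
    _ = ‖f‖ := by simp

theorem toLp_comp_of_measurePreserving {μ : Measure Y} [IsFiniteMeasure μ] {T : Y → Y}
    (hT : Continuous T) (hμ : MeasurePreserving T μ μ) (f : C(Y, ℝ)) :
    toLp (E := ℝ) 2 μ ℝ (f.comp ⟨T, hT⟩) =
      Lp.compMeasurePreserving T hμ (toLp 2 μ ℝ f) := by
  refine Lp.ext ((coeFn_toLp μ _).trans ?_)
  refine ((Lp.coeFn_compMeasurePreserving _ hμ).trans ?_).symm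
  exact (coeFn_toLp μ f).comp_tendsto hμ.quasiMeasurePreserving.tendsto_ae

end ContinuousMap

theorem measurePreserving_of_mem_invMeas {Y : Type*} [TopologicalSpace Y] [MeasurableSpace Y]
    [BorelSpace Y] {T : Y → Y} (hT : Continuous T) {ν : ProbabilityMeasure Y}
    (hν : ν ∈ InvMeas T) : MeasurePreserving T ν ν :=
  ⟨hT.measurable, hν⟩

section MeanErgodic

variable {Y : Type*} [TopologicalSpace Y] [CompactSpace Y] [MeasurableSpace Y] [BorelSpace Y]
  {μ : Measure Y} [IsProbabilityMeasure μ] {T : Y → Y}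

theorem Ergodic.exists_tendsto_integral_abs_birkhoffAverage_sub_const (hT : Continuous T)
    (herg : Ergodic T μ) (f : C(Y, ℝ)) :
    ∃ c : ℝ,
      Tendsto (fun n => ∫ x, |birkhoffAverage ℝ T f n x - c| ∂μ) atTop (𝓝 0) := by
  let K : Lp ℝ 2 μ →L[ℝ] Lp ℝ 2 μ :=
    (Lp.compMeasurePreservingₗᵢ ℝ T herg.toMeasurePreserving).toContinuousLinearMap
  let Φ : C(Y, ℝ) →L[ℝ] Lp ℝ 2 μ := ContinuousMap.toLp 2 μ ℝ
  have hsemi : Function.Semiconj Φ (fun g => g.comp ⟨T, hT⟩) K := fun g =>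
    ContinuousMap.toLp_comp_of_measurePreserving hT herg.toMeasurePreserving g
  obtain ⟨P, hfix, hconv⟩ : ∃ P, K P = P ∧
      Tendsto (fun n => birkhoffAverage ℝ K id n (Φ f)) atTop (𝓝 P) := by
    refine ⟨_, ?_, K.tendsto_birkhoffAverage_orthogonalProjection
      (LinearIsometry.norm_toContinuousLinearMap_le _) (Φ f)⟩
    exact LinearMap.mem_eqLocus.1 (SetLike.coe_mem _)
  have hPT : (P : Y → ℝ) ∘ T =ᵐ[μ] P := by
    have h := Lp.coeFn_compMeasurePreserving P herg.toMeasurePreserving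
    change ⇑(K P) =ᵐ[μ] _ at h
    rw [hfix] at h
    exact h.symm
  obtain ⟨c, hc⟩ := herg.ae_eq_const_of_ae_eq_comp₀
    (Lp.aestronglyMeasurable P).aemeasurable.nullMeasurable hPT
  refine ⟨c, squeeze_zero (fun n => integral_nonneg fun _ => abs_nonneg _) (fun n => ?_)
    (tendsto_iff_norm_sub_tendsto_zero.1 hconv)⟩
  rw [← hsemi.map_birkhoffAverage]
  set v := birkhoffAverage ℝ (fun g : C(Y, ℝ) => g.comp ⟨T, hT⟩) id n f with hv
  refine le_of_eq_of_le (integral_congr_ae ?_) (Lp.integral_norm_le_norm_two _)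
  filter_upwards [Lp.coeFn_sub (Φ v) P, ContinuousMap.coeFn_toLp (p := 2) (𝕜 := ℝ) μ v, hc]
    with x h1 h2 h3
  rw [h1, Pi.sub_apply, h2, h3, hv, ContinuousMap.birkhoffAverage_comp_apply, Real.norm_eq_abs]
  rfl

theorem Ergodic.tendsto_integral_abs_birkhoffAverage_sub_integral (hT : Continuous T)
    (herg : Ergodic T μ) (f : C(Y, ℝ)) :
    Tendsto (fun n => ∫ x, |birkhoffAverage ℝ T f n x - ∫ y, f y ∂μ| ∂μ) atTop
      (𝓝 0) := by
  obtain ⟨c, hc⟩ := herg.exists_tendsto_integral_abs_birkhoffAverage_sub_const hT f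
  refine squeeze_zero' (Eventually.of_forall fun n => integral_nonneg fun _ => abs_nonneg _) ?_
    (by simpa using hc.const_mul 2)
  filter_upwards [eventually_ne_atTop 0] with n hn
  have hint : Integrable (birkhoffAverage ℝ T f n) μ := by
    simpa only [← funext (ContinuousMap.birkhoffAverage_comp_apply hT f n)] using
      (birkhoffAverage ℝ (fun g : C(Y, ℝ) => g.comp ⟨T, hT⟩) id n f).integrable μ
  simpa only [herg.toMeasurePreserving.integral_birkhoffAverage (f.integrable μ) hn] using
    integral_abs_sub_integral_le hint c

end MeanErgodic

section Freezing

variable {Y : Type*} [TopologicalSpace Y] [CompactSpace Y] [MeasurableSpace Y] [BorelSpace Y]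
  {T : Y → Y} {μ : ProbabilityMeasure Y}

theorem Ergodic.exists_birkhoffAverage_integral_abs_sub_le (hT : Continuous T)
    (herg : Ergodic T μ) (u : C(Y, ℝ)) {ε : ℝ} (hε : 0 < ε) :
    ∃ v : C(Y, ℝ), (∀ ν ∈ InvMeas T, ∫ x, v x ∂ν = ∫ x, u x ∂ν) ∧
      (0 ≤ u → 0 ≤ v) ∧ ∫ x, |v x - ∫ y, u y ∂μ| ∂μ ≤ ε := by
  obtain ⟨n, hsmall, hn⟩ :=
    (((herg.tendsto_integral_abs_birkhoffAverage_sub_integral hT u).eventually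
      (ge_mem_nhds hε)).and (eventually_ne_atTop 0)).exists
  refine ⟨birkhoffAverage ℝ (fun g : C(Y, ℝ) => g.comp ⟨T, hT⟩) id n u, fun ν hν => ?_,
    fun hu => ContinuousMap.le_def.2 fun x => ?_, ?_⟩
  · simp only [ContinuousMap.birkhoffAverage_comp_apply]
    exact (measurePreserving_of_mem_invMeas hT hν).integral_birkhoffAverage (u.integrable _) hn
  · rw [ContinuousMap.zero_apply, ContinuousMap.birkhoffAverage_comp_apply]
    exact smul_nonneg (by positivity) (Finset.sum_nonneg fun k _ => hu _)
  · simpa only [ContinuousMap.birkhoffAverage_comp_apply] using hsmall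

theorem Ergodic.exists_common_part (hT : Continuous T) (herg : Ergodic T μ) {A B : C(Y, ℝ)}
    (hA : 0 ≤ A) (hB : 0 ≤ B) (hAB : ∫ x, A x ∂μ = ∫ x, B x ∂μ) {ε : ℝ} (hε : 0 < ε) :
    ∃ A' B' r : C(Y, ℝ), 0 ≤ A' ∧ 0 ≤ B' ∧ ∫ x, A' x ∂μ ≤ ε ∧
      0 ≤ r ∧ r ≤ .const Y (∫ x, A x ∂μ) ∧ ∀ ν ∈ InvMeas T,
        ∫ x, A' x ∂ν = ∫ x, A x ∂ν - ∫ x, r x ∂ν ∧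
        ∫ x, B' x ∂ν = ∫ x, B x ∂ν - ∫ x, r x ∂ν := by
  set δ := ∫ x, A x ∂μ
  obtain ⟨vA, hvA, hvA₀, hvAδ⟩ :=
    herg.exists_birkhoffAverage_integral_abs_sub_le hT A (half_pos hε)
  obtain ⟨vB, hvB, hvB₀, hvBδ⟩ :=
    herg.exists_birkhoffAverage_integral_abs_sub_le hT B (half_pos hε)
  rw [← hAB] at hvBδ
  have hint_sub : ∀ (ν : Measure Y) [IsFiniteMeasure ν] (f g : C(Y, ℝ)),
      ∫ x, (f - g) x ∂ν = ∫ x, f x ∂ν - ∫ x, g x ∂ν := fun ν _ f g =>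
    integral_sub (f.integrable ν) (g.integrable ν)
  have hint_abs : ∀ v : C(Y, ℝ), Integrable (fun x => |v x - δ|) μ := fun v =>
    ((v.integrable _).sub (integrable_const δ)).abs
  let r := vA ⊓ vB ⊓ .const Y δ
  refine ⟨vA - r, vB - r, r, sub_nonneg.2 (inf_le_left.trans inf_le_left),
    sub_nonneg.2 (inf_le_left.trans inf_le_right), ?_,
    le_inf (le_inf (hvA₀ hA) (hvB₀ hB)) fun _ => integral_nonneg fun x => hA x, inf_le_right,
    fun ν hν => ?_⟩
  · calc ∫ x, (vA - r) x ∂μ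
        ≤ ∫ x, (|vA x - δ| + |vB x - δ|) ∂μ :=
          integral_mono ((vA - r).integrable _) ((hint_abs vA).add (hint_abs vB))
            fun x => sub_min_min_le_abs_add_abs (vA x) (vB x) δ
      _ = ∫ x, |vA x - δ| ∂μ + ∫ x, |vB x - δ| ∂μ :=
          integral_add (hint_abs vA) (hint_abs vB)
      _ ≤ ε := by linarith
  · rw [hint_sub, hint_sub, hvA ν hν, hvB ν hν]
    exact ⟨rfl, rfl⟩

theorem Ergodic.exists_common_part_seq (hT : Continuous T) (herg : Ergodic T μ) {A B : C(Y, ℝ)}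
    (hA : 0 ≤ A) (hB : 0 ≤ B) (hAB : ∫ x, A x ∂μ = ∫ x, B x ∂μ) :
    ∃ a b r : ℕ → C(Y, ℝ), a 0 = A ∧ b 0 = B ∧ ∀ n, 0 ≤ a n ∧ 0 ≤ b n ∧
      ∫ x, a (n + 1) x ∂μ ≤ (1 / 2) ^ n ∧
      0 ≤ r n ∧ r n ≤ .const Y (∫ x, a n x ∂μ) ∧ ∀ ν ∈ InvMeas T,
        ∫ x, a (n + 1) x ∂ν = ∫ x, a n x ∂ν - ∫ x, r n x ∂ν ∧
        ∫ x, b (n + 1) x ∂ν = ∫ x, b n x ∂ν - ∫ x, r n x ∂ν := by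
  have hμ : μ ∈ InvMeas T := herg.toMeasurePreserving.map_eq
  choose! A' B' r hA' hB' hsmall hr₀ hr hinv using
    fun (A B : C(Y, ℝ)) (hA : 0 ≤ A) (hB : 0 ≤ B) (hAB : ∫ x, A x ∂μ = ∫ x, B x ∂μ) (n : ℕ) =>
    herg.exists_common_part hT hA hB hAB (pow_pos (one_half_pos (α := ℝ)) n)
  let p : ℕ → C(Y, ℝ) × C(Y, ℝ) := fun n =>
    Nat.rec (A, B) (fun k q => (A' q.1 q.2 k, B' q.1 q.2 k)) n
  have hp : ∀ n, 0 ≤ (p n).1 ∧ 0 ≤ (p n).2 ∧ ∫ x, (p n).1 x ∂μ = ∫ x, (p n).2 x ∂μ := by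
    intro n
    induction n with
    | zero => exact ⟨hA, hB, hAB⟩
    | succ n ih =>
      obtain ⟨h₁, h₂, h₃⟩ := ih
      obtain ⟨hinvA, hinvB⟩ := hinv _ _ h₁ h₂ h₃ n μ hμ
      exact ⟨hA' _ _ h₁ h₂ h₃ n, hB' _ _ h₁ h₂ h₃ n, by rw [hinvA, hinvB, h₃]⟩
  refine ⟨fun n => (p n).1, fun n => (p n).2, fun n => r (p n).1 (p n).2 n, rfl, rfl,
    fun n => ?_⟩
  obtain ⟨h₁, h₂, h₃⟩ := hp n
  exact ⟨h₁, h₂, hsmall _ _ h₁ h₂ h₃ n, hr₀ _ _ h₁ h₂ h₃ n, hr _ _ h₁ h₂ h₃ n,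
    hinv _ _ h₁ h₂ h₃ n⟩

theorem Ergodic.exists_integral_le_of_integral_eq (hT : Continuous T) (herg : Ergodic T μ)
    {A B : C(Y, ℝ)} (hA : 0 ≤ A) (hB : 0 ≤ B) (hAB : ∫ x, A x ∂μ = ∫ x, B x ∂μ) :
    ∃ R : C(Y, ℝ),
      (∀ ν ∈ InvMeas T, ∫ x, R x ∂ν ≤ ∫ x, A x ∂ν ∧ ∫ x, R x ∂ν ≤ ∫ x, B x ∂ν) ∧
      ∫ x, R x ∂μ = ∫ x, A x ∂μ := by
  have hμ : μ ∈ InvMeas T := herg.toMeasurePreserving.map_eq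
  obtain ⟨a, b, r, rfl, rfl, h⟩ := herg.exists_common_part_seq hT hA hB hAB
  have hnorm : ∀ n, ‖r n‖ ≤ ∫ x, a n x ∂μ := fun n => by
    obtain ⟨ha, -, -, hr₀, hr, -⟩ := h n
    refine (ContinuousMap.norm_le _ (integral_nonneg fun x => ha x)).2 fun x => ?_
    have hr₀x : 0 ≤ r n x := hr₀ x
    rw [Real.norm_eq_abs, abs_of_nonneg hr₀x]
    exact hr x
  have hsum : Summable r := (summable_nat_add_iff 1).1 <|
    Summable.of_norm_bounded summable_geometric_two fun n => (hnorm (n + 1)).trans (h n).2.2.1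
  have hlim : ∀ ν ∈ InvMeas T,
      Tendsto (fun n => ∫ x, a n x ∂ν) atTop
        (𝓝 (∫ x, a 0 x ∂ν - ∫ x, (∑' n, r n) x ∂ν)) ∧
      Tendsto (fun n => ∫ x, b n x ∂ν) atTop
        (𝓝 (∫ x, b 0 x ∂ν - ∫ x, (∑' n, r n) x ∂ν)) :=
    fun ν hν => ⟨(ContinuousMap.hasSum_integral hsum.hasSum ν).tendsto_of_succ_eq_sub
        fun n => ((h n).2.2.2.2.2 ν hν).1,
      (ContinuousMap.hasSum_integral hsum.hasSum ν).tendsto_of_succ_eq_sub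
        fun n => ((h n).2.2.2.2.2 ν hν).2⟩
  have hvanish : Tendsto (fun n => ∫ x, a n x ∂μ) atTop (𝓝 0) :=
    (tendsto_add_atTop_iff_nat 1).1 <| squeeze_zero (fun n => integral_nonneg fun x => (h _).1 x)
      (fun n => (h n).2.2.1) (tendsto_pow_atTop_nhds_zero_of_lt_one (by norm_num) (by norm_num))
  refine ⟨∑' n, r n, fun ν hν => ⟨?_, ?_⟩, ?_⟩
  · exact sub_nonneg.1 (ge_of_tendsto' (hlim ν hν).1 fun n => integral_nonneg fun x => (h n).1 x)
  · exact sub_nonneg.1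
      (ge_of_tendsto' (hlim ν hν).2 fun n => integral_nonneg fun x => (h n).2.1 x)
  · exact (sub_eq_zero.1 (tendsto_nhds_unique (hlim μ hμ).1 hvanish)).symm

theorem Ergodic.exists_maximizing_minorant (hT : Continuous T) (herg : Ergodic T μ)
    (φ : C(Y, ℝ)) :
    ∃ ψ : C(Y, ℝ), ∫ x, ψ x ∂μ = ∫ x, φ x ∂μ ∧
      ∀ ν ∈ InvMeas T, ∫ x, ψ x ∂ν ≤ ∫ x, φ x ∂μ ∧ ∫ x, ψ x ∂ν ≤ ∫ x, φ x ∂ν := by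
  set c := ∫ x, φ x ∂μ
  set g := φ - .const Y c
  have hg : ∀ ν : ProbabilityMeasure Y,
      ∫ x, g⁺ x ∂ν - ∫ x, g⁻ x ∂ν = ∫ x, φ x ∂ν - c := by
    intro ν
    rw [← integral_sub (g⁺.integrable _) (g⁻.integrable _)]
    simp only [← ContinuousMap.sub_apply, posPart_sub_negPart, g]
    exact (integral_sub (φ.integrable _) (integrable_const c)).trans (by simp)
  obtain ⟨R, hR, hRμ⟩ := herg.exists_integral_le_of_integral_eq hT (posPart_nonneg g)
    (negPart_nonneg g) (by linarith [hg μ])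
  have hψ : ∀ ν : ProbabilityMeasure Y, ∫ x, (φ + R - g⁺) x ∂ν =
      ∫ x, φ x ∂ν + ∫ x, R x ∂ν - ∫ x, g⁺ x ∂ν := by
    intro ν
    simp only [← ContinuousMap.integralCLM_apply, map_add, map_sub]
  refine ⟨φ + R - g⁺, by rw [hψ, hRμ]; ring, fun ν hν => ?_⟩
  rw [hψ]
  obtain ⟨hRA, hRB⟩ := hR ν hν
  constructor <;> linarith [hg ν]

end Freezing

section Pressure

variable {Y : Type*} [MetricSpace Y] [MeasurableSpace Y] {T : Y → Y}
  {h : ProbabilityMeasure Y → ℝ} {φ : C(Y, ℝ)} {μ : ProbabilityMeasure Y}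

theorem equilib_eq_singleton_of_forall_lt (hμ : μ ∈ InvMeas T)
    (hlt : ∀ ν ∈ InvMeas T, ν ≠ μ → h ν + ∫ x, φ x ∂ν < h μ + ∫ x, φ x ∂μ) :
    {ν | IsEquilib T h φ ν} = {μ} := by
  have hpress : press T h φ = h μ + ∫ x, φ x ∂μ := by
    refine IsGreatest.csSup_eq ⟨⟨μ, hμ, rfl⟩, ?_⟩
    rintro _ ⟨ν, hν, rfl⟩
    rcases eq_or_ne ν μ with rfl | hne
    · exact le_rfl
    · exact (hlt ν hν hne).le
  ext ν
  simp only [IsEquilib, hpress, mem_ofPred, mem_singleton_iff]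
  constructor
  · rintro ⟨hν, heq⟩
    by_contra hne
    exact (hlt ν hν hne).ne heq
  · rintro rfl
    exact ⟨hμ, rfl⟩

theorem forall_lt_of_equilib_eq_singleton [CompactSpace Y] [BorelSpace Y]
    (hbd : BddAbove (h '' InvMeas T)) (hφ : {ν | IsEquilib T h φ ν} = {μ}) :
    ∀ ν ∈ InvMeas T, ν ≠ μ → h ν + ∫ x, φ x ∂ν < h μ + ∫ x, φ x ∂μ := by
  have hμ : μ ∈ {ν | IsEquilib T h φ ν} := hφ ▸ mem_singleton μ
  obtain ⟨C, hC⟩ := hbd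
  intro ν hν hne
  have hle : h ν + ∫ x, φ x ∂ν ≤ press T h φ := by
    refine le_csSup ⟨C + ‖φ‖, ?_⟩ ⟨ν, hν, rfl⟩
    rintro _ ⟨ν', hν', rfl⟩
    exact add_le_add (hC ⟨ν', hν', rfl⟩) (φ.integral_le_norm_s2 _)
  rw [← hμ.2] at hle
  refine hle.lt_of_ne fun heq => hne ?_
  have : ν ∈ {ν | IsEquilib T h φ ν} := ⟨hν, heq.trans hμ.2⟩
  rwa [hφ] at this

end Pressure

theorem stmt2_general
    (T : X → X) (hT : Continuous T)
    (h : ProbabilityMeasure X → ℝ)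
    (hbd : ∃ C : ℝ, ∀ μ ∈ InvMeas T, |h μ| ≤ C)
    (μ : ProbabilityMeasure X) (hμ : μ ∈ InvMeas T) (herg : Ergodic T (μ : Measure X)) :
    (∃ φ : C(X, ℝ), {ν | IsEquilib T h φ ν} = {μ}) ↔
      (∃ ψ : C(X, ℝ), ∀ β : ℝ, 1 ≤ β → {ν | IsEquilib T h (β • ψ) ν} = {μ}) := by
  constructor
  · rintro ⟨φ, hφ⟩
    obtain ⟨C, hC⟩ := hbd
    have hlt := forall_lt_of_equilib_eq_singleton
      ⟨C, by rintro _ ⟨ν, hν, rfl⟩; exact le_of_abs_le (hC ν hν)⟩ hφ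
    obtain ⟨ψ, hψμ, hψ⟩ := herg.exists_maximizing_minorant hT φ
    refine ⟨ψ, fun β hβ => equilib_eq_singleton_of_forall_lt hμ fun ν hν hne => ?_⟩
    obtain ⟨hle, hleφ⟩ := hψ ν hν
    have := hlt ν hν hne
    simp only [ContinuousMap.coe_smul, Pi.smul_apply, smul_eq_mul, integral_const_mul, hψμ]
    nlinarith [mul_le_mul_of_nonneg_left hle (sub_nonneg.2 hβ)]
  · rintro ⟨ψ, hψ⟩
    exact ⟨ψ, by simpa using hψ 1 le_rfl⟩

theorem stmt2
    (T : X → X) (hT : Continuous T) (hne : (InvMeas T).Nonempty)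
    (h : ProbabilityMeasure X → ℝ)
    (hbd : ∃ C : ℝ, ∀ μ ∈ InvMeas T, |h μ| ≤ C)
    (haff : ∀ μ ν : ProbabilityMeasure X, μ ∈ InvMeas T → ν ∈ InvMeas T →
      ∀ t : ℝ, 0 ≤ t → t ≤ 1 → ∀ σ : ProbabilityMeasure X,
        (σ : Measure X) =
          ENNReal.ofReal t • (μ : Measure X) + ENNReal.ofReal (1 - t) • (ν : Measure X) →
        h σ = t * h μ + (1 - t) * h ν)
    (μ : ProbabilityMeasure X) (hμ : μ ∈ InvMeas T) (herg : Ergodic T (μ : Measure X)) :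
    (∃ φ : C(X, ℝ), {ν | IsEquilib T h φ ν} = {μ}) ↔
      (∃ ψ : C(X, ℝ), ∀ β : ℝ, 1 ≤ β → {ν | IsEquilib T h (β • ψ) ν} = {μ}) :=
  stmt2_general T hT h hbd μ hμ herg
end

section
/- Let φ ∈ C(X) and β₀ > 0. Then φ freezes at inverse temperature β₀ (i.e., there exists μ ∈ M_T(X) that is an equilibrium state for βφ for all β ≥ β₀) if and only if P(β₀φ) = β₀·Max(φ) + h_∞(φ) and there exists β > β₀ for which βφ has at least one equilibrium state. -/
open MeasureTheory Filter Set
open scoped NNReal ENNReal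

variable {X : Type*} [MetricSpace X] [CompactSpace X] [Nonempty X]
  [MeasurableSpace X] [BorelSpace X]

/-! `P_φ(β)` is the supremum of the lines `β ↦ h(μ) + β ∫ φ dμ`, `μ ∈ M_T(X)`. A line that stays
on top for all `β ≥ β₀` must have the largest slope `Max(φ)` and, among those, the largest
intercept `h_∞(φ)`: it is the slant asymptote. Conversely, each line lies below
`P_φ(β₀) + (β - β₀) Max(φ)` for `β ≥ β₀`, while weak-* compactness of `M_T(X)` provides
maximizing measures and hence `P_φ ≥` asymptote everywhere; so if `P_φ(β₀)` is on the asymptote,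
`P_φ` coincides with it on `[β₀, ∞)`, and an equilibrium state at some `β > β₀` has to be a line of
slope `Max(φ)` and intercept `h_∞(φ)`. -/

theorem le_of_forall_add_mul_le {x y x' y' β₀ : ℝ}
    (h : ∀ β, β₀ ≤ β → x + β * y ≤ x' + β * y') : y ≤ y' := by
  by_contra! hlt
  have hpos : 0 < y - y' := sub_pos.mpr hlt
  set β := max β₀ ((x' - x + 1) / (y - y'))
  have hβ : x' - x + 1 ≤ β * (y - y') := (div_le_iff₀ hpos).mp (le_max_right _ _)
  linarith [h β (le_max_left _ _)]

section AffineFamily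

/- The measures are abstracted to an index set `S`, with `e = h`, `a μ = ∫ φ dμ`,
`P β = P(βφ)`, `M = Max(φ)` and `H = h_∞(φ)`. -/

variable {ι : Type*} {S : Set ι} {e a : ι → ℝ} {P : ℝ → ℝ} {M H β β₀ : ℝ} {i : ι}

theorem add_mul_le_of_isLUB (hP : IsLUB ((fun i => e i + β * a i) '' S) (P β)) (hi : i ∈ S) :
    e i + β * a i ≤ P β :=
  hP.1 (Set.mem_image_of_mem _ hi)

theorem mul_add_le_of_isLUB (hP : IsLUB ((fun i => e i + β * a i) '' S) (P β))
    (hH : IsLUB (e '' {i ∈ S | a i = M}) H) : β * M + H ≤ P β := by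
  suffices H ≤ P β - β * M by linarith
  refine hH.2 ?_
  rintro _ ⟨i, ⟨hi, rfl⟩, rfl⟩
  linarith [add_mul_le_of_isLUB hP hi]

theorem eq_mul_add_of_le (hP : ∀ β, IsLUB ((fun i => e i + β * a i) '' S) (P β))
    (hM : IsLUB (a '' S) M) (hH : IsLUB (e '' {i ∈ S | a i = M}) H)
    (hP₀ : P β₀ = β₀ * M + H) (hβ : β₀ ≤ β) : P β = β * M + H := by
  refine le_antisymm ((hP β).2 ?_) (mul_add_le_of_isLUB (hP β) hH)
  rintro _ ⟨i, hi, rfl⟩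
  have h₀ := hP₀ ▸ add_mul_le_of_isLUB (hP β₀) hi
  have hai : a i ≤ M := hM.1 (Set.mem_image_of_mem _ hi)
  nlinarith [mul_le_mul_of_nonneg_left hai (sub_nonneg.mpr hβ)]

theorem isGreatest_of_forall_eq (hP : ∀ β, IsLUB ((fun i => e i + β * a i) '' S) (P β))
    (hi : i ∈ S) (heq : ∀ β, β₀ ≤ β → e i + β * a i = P β) :
    IsGreatest (a '' S) (a i) := by
  refine ⟨Set.mem_image_of_mem _ hi, ?_⟩
  rintro _ ⟨j, hj, rfl⟩
  exact le_of_forall_add_mul_le fun β hβ => heq β hβ ▸ add_mul_le_of_isLUB (hP β) hj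

theorem eq_and_eq_of_forall_eq (hP : ∀ β, IsLUB ((fun i => e i + β * a i) '' S) (P β))
    (hM : IsLUB (a '' S) M) (hH : IsLUB (e '' {i ∈ S | a i = M}) H)
    (hi : i ∈ S) (heq : ∀ β, β₀ ≤ β → e i + β * a i = P β) : a i = M ∧ e i = H := by
  have haM : a i = M := (isGreatest_of_forall_eq hP hi heq).isLUB.unique hM
  refine ⟨haM, (IsGreatest.isLUB (s := e '' {j ∈ S | a j = M}) ⟨⟨i, ⟨hi, haM⟩, rfl⟩, ?_⟩).unique hH⟩
  rintro _ ⟨j, ⟨hj, hjM⟩, rfl⟩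
  have := heq β₀ le_rfl ▸ add_mul_le_of_isLUB (hP β₀) hj
  rw [hjM, haM] at this
  linarith

theorem eq_and_eq_of_eq_of_lt (hP : ∀ β, IsLUB ((fun i => e i + β * a i) '' S) (P β))
    (hM : IsLUB (a '' S) M) (hH : IsLUB (e '' {i ∈ S | a i = M}) H)
    (hP₀ : P β₀ = β₀ * M + H) {β₁ : ℝ} (hβ₁ : β₀ < β₁)
    (hi : i ∈ S) (heq : e i + β₁ * a i = P β₁) : a i = M ∧ e i = H := by
  have hP₁ := eq_mul_add_of_le hP hM hH hP₀ hβ₁.le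
  have h₀ := hP₀ ▸ add_mul_le_of_isLUB (hP β₀) hi
  have hai : a i = M := le_antisymm (hM.1 (Set.mem_image_of_mem _ hi)) (by nlinarith)
  exact ⟨hai, by rw [hai] at heq; linarith⟩

theorem exists_forall_eq_iff (hP : ∀ β, IsLUB ((fun i => e i + β * a i) '' S) (P β))
    (hM : IsLUB (a '' S) M) (hH : IsLUB (e '' {i ∈ S | a i = M}) H) :
    (∃ i, ∀ β, β₀ ≤ β → i ∈ S ∧ e i + β * a i = P β) ↔
      (P β₀ = β₀ * M + H ∧ ∃ β, β₀ < β ∧ ∃ i, i ∈ S ∧ e i + β * a i = P β) := by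
  constructor
  · rintro ⟨i, hi⟩
    obtain ⟨hiS, hi₀⟩ := hi β₀ le_rfl
    obtain ⟨haM, heH⟩ := eq_and_eq_of_forall_eq hP hM hH hiS fun β hβ => (hi β hβ).2
    exact ⟨by rw [← hi₀, haM, heH, add_comm], β₀ + 1, by linarith, i, hi _ (by linarith)⟩
  · rintro ⟨hP₀, β₁, hβ₁, i, hi, heq⟩
    obtain ⟨hai, hei⟩ := eq_and_eq_of_eq_of_lt hP hM hH hP₀ hβ₁ hi heq
    exact ⟨i, fun β hβ => ⟨hi, by rw [eq_mul_add_of_le hP hM hH hP₀ hβ, hai, hei, add_comm]⟩⟩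

end AffineFamily

theorem isClosed_invMeas {Y : Type*} [MetricSpace Y] [MeasurableSpace Y] [BorelSpace Y]
    {T : Y → Y} (hT : Continuous T) : IsClosed (InvMeas T) := by
  have : InvMeas T = {μ | μ.map hT.measurable.aemeasurable = μ} := by
    ext μ
    rw [Set.mem_ofPred_eq, ← ProbabilityMeasure.toMeasure_injective.eq_iff,
      ProbabilityMeasure.toMeasure_map]
    rfl
  rw [this]
  exact isClosed_eq (ProbabilityMeasure.continuous_map hT) continuous_id

theorem integral_le_norm_continuousMap {Y : Type*} [TopologicalSpace Y] [CompactSpace Y]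
    [MeasurableSpace Y] (φ : C(Y, ℝ)) (μ : ProbabilityMeasure Y) :
    ∫ y, φ y ∂(μ : Measure Y) ≤ ‖φ‖ := by
  have := norm_integral_le_of_norm_le_const (μ := (μ : Measure Y))
    (Eventually.of_forall φ.norm_coe_le_norm)
  rw [probReal_univ, mul_one] at this
  exact (le_abs_self _).trans this

theorem integral_smul_continuousMap {Y : Type*} [TopologicalSpace Y] [MeasurableSpace Y]
    (β : ℝ) (φ : C(Y, ℝ)) (μ : Measure Y) : ∫ y, (β • φ) y ∂μ = β * ∫ y, φ y ∂μ := by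
  simp only [ContinuousMap.smul_apply, smul_eq_mul, integral_const_mul]

section Pressure

variable {Y : Type*} [MetricSpace Y] [CompactSpace Y] [MeasurableSpace Y] {T : Y → Y}

theorem isLUB_press (hne : (InvMeas T).Nonempty) {h : ProbabilityMeasure Y → ℝ}
    (hh : BddAbove (h '' InvMeas T)) (φ : C(Y, ℝ)) :
    IsLUB ((fun μ : ProbabilityMeasure Y => h μ + ∫ y, φ y ∂(μ : Measure Y)) '' InvMeas T)
      (press T h φ) := by
  refine isLUB_csSup (hne.image _) ?_
  obtain ⟨C, hC⟩ := hh
  refine ⟨C + ‖φ‖, ?_⟩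
  rintro _ ⟨μ, hμ, rfl⟩
  exact add_le_add (hC (Set.mem_image_of_mem _ hμ)) (integral_le_norm_continuousMap φ μ)

theorem isLUB_maxInt (hne : (InvMeas T).Nonempty) (φ : C(Y, ℝ)) :
    IsLUB ((fun μ : ProbabilityMeasure Y => ∫ y, φ y ∂(μ : Measure Y)) '' InvMeas T)
      (MaxInt T φ) :=
  isLUB_csSup (hne.image _) ⟨‖φ‖, Set.forall_mem_image.2 fun μ _ =>
    integral_le_norm_continuousMap φ μ⟩

variable [BorelSpace Y]

theorem exists_integral_eq_maxInt (hT : Continuous T) (hne : (InvMeas T).Nonempty)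
    (φ : C(Y, ℝ)) : ∃ μ ∈ InvMeas T, ∫ y, φ y ∂(μ : Measure Y) = MaxInt T φ := by
  obtain ⟨μ, hμ, hmax⟩ := (isClosed_invMeas hT).isCompact.exists_isMaxOn hne
    (ProbabilityMeasure.continuous_integral_continuousMap φ).continuousOn
  exact ⟨μ, hμ, ((isLUB_maxInt hne φ).unique
    (IsGreatest.isLUB ⟨Set.mem_image_of_mem _ hμ, Set.forall_mem_image.2 hmax⟩)).symm⟩

theorem isLUB_hInfty (hT : Continuous T) (hne : (InvMeas T).Nonempty)
    {h : ProbabilityMeasure Y → ℝ} (hh : BddAbove (h '' InvMeas T)) (φ : C(Y, ℝ)) :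
    IsLUB (h '' {μ ∈ InvMeas T | ∫ y, φ y ∂(μ : Measure Y) = MaxInt T φ}) (hInfty T h φ) := by
  obtain ⟨μ, hμ⟩ := exists_integral_eq_maxInt hT hne φ
  exact isLUB_csSup ⟨h μ, Set.mem_image_of_mem _ hμ⟩
    (hh.mono (Set.image_mono (Set.sep_subset _ _)))

end Pressure

theorem stmt9_general
    (T : X → X) (hT : Continuous T) (hne : (InvMeas T).Nonempty)
    (h : ProbabilityMeasure X → ℝ)
    (hbd : ∃ C : ℝ, ∀ μ ∈ InvMeas T, |h μ| ≤ C)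
    (φ : C(X, ℝ)) (β₀ : ℝ) :
    (∃ μ : ProbabilityMeasure X, ∀ β : ℝ, β₀ ≤ β → IsEquilib T h (β • φ) μ) ↔
      (press T h (β₀ • φ) = β₀ * MaxInt T φ + hInfty T h φ ∧
        ∃ β : ℝ, β₀ < β ∧ ∃ ν : ProbabilityMeasure X, IsEquilib T h (β • φ) ν) := by
  obtain ⟨C, hC⟩ := hbd
  have hh : BddAbove (h '' InvMeas T) :=
    ⟨C, Set.forall_mem_image.2 fun μ hμ => (le_abs_self _).trans (hC μ hμ)⟩
  have hP (β : ℝ) := isLUB_press hne hh (β • φ)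
  simp only [integral_smul_continuousMap] at hP
  simp only [IsEquilib, integral_smul_continuousMap]
  exact exists_forall_eq_iff hP (isLUB_maxInt hne φ) (isLUB_hInfty hT hne hh φ)

theorem stmt9
    (T : X → X) (hT : Continuous T) (hne : (InvMeas T).Nonempty)
    (h : ProbabilityMeasure X → ℝ)
    (hbd : ∃ C : ℝ, ∀ μ ∈ InvMeas T, |h μ| ≤ C)
    (haff : ∀ μ ν : ProbabilityMeasure X, μ ∈ InvMeas T → ν ∈ InvMeas T →
      ∀ t : ℝ, 0 ≤ t → t ≤ 1 → ∀ σ : ProbabilityMeasure X,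
        (σ : Measure X) =
          ENNReal.ofReal t • (μ : Measure X) + ENNReal.ofReal (1 - t) • (ν : Measure X) →
        h σ = t * h μ + (1 - t) * h ν)
    (φ : C(X, ℝ)) (β₀ : ℝ) (hβ₀ : 0 < β₀) :
    (∃ μ : ProbabilityMeasure X, ∀ β : ℝ, β₀ ≤ β → IsEquilib T h (β • φ) μ) ↔
      (press T h (β₀ • φ) = β₀ * MaxInt T φ + hInfty T h φ ∧
        ∃ β : ℝ, β₀ < β ∧ ∃ ν : ProbabilityMeasure X, IsEquilib T h (β • φ) ν) :=
  stmt9_general T hT hne h hbd φ β₀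
end

section
/- Let φ ∈ C(X), let (β_n) be a sequence of positive reals with β_n → ∞, and for each n let μ_n ∈ M_T(X) be an equilibrium state for β_n φ. If (μ_n) converges to μ∞ ∈ M_T(X) in the weak-* topology, then ∫ φ dμ∞ = Max(φ); that is, every zero-temperature limit of φ is φ-maximizing. -/
/-!
If `μ` is an equilibrium state for `β • φ` and `ν` is invariant, then
`β (∫ φ dν - ∫ φ dμ) ≤ h μ - h ν ≤ 2C` with `C` a bound for `|h|`, so `μ` maximizes `φ` up to
`2C / β`. As `βₙ → ∞` this error vanishes, and weak-* continuity of `μ ↦ ∫ φ dμ` carries the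
inequality `∫ φ dν ≤ ∫ φ dμₙ + 2C / βₙ` to the limit measure.
-/

open MeasureTheory Filter Set
open scoped NNReal ENNReal

variable {X : Type*} [MetricSpace X] [CompactSpace X] [Nonempty X]
  [MeasurableSpace X] [BorelSpace X]

section

variable {Y : Type*} [TopologicalSpace Y] [CompactSpace Y] [MeasurableSpace Y]

lemma ContinuousMap.abs_integral_le_norm (μ : Measure Y) [IsProbabilityMeasure μ]
    (φ : C(Y, ℝ)) : |∫ y, φ y ∂μ| ≤ ‖φ‖ := by
  simpa using norm_integral_le_of_norm_le_const (μ := μ) (Eventually.of_forall φ.norm_coe_le_norm)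

lemma bddAbove_image_add_integral {S : Set (ProbabilityMeasure Y)}
    {h : ProbabilityMeasure Y → ℝ} (hh : BddAbove (h '' S)) (φ : C(Y, ℝ)) :
    BddAbove ((fun μ : ProbabilityMeasure Y => h μ + ∫ y, φ y ∂(μ : Measure Y)) '' S) := by
  obtain ⟨C, hC⟩ := hh
  refine ⟨C + ‖φ‖, ?_⟩
  rintro _ ⟨μ, hμ, rfl⟩
  exact add_le_add (hC ⟨μ, hμ, rfl⟩) (le_of_abs_le (φ.abs_integral_le_norm μ))

end

section

variable {Y : Type*} [MetricSpace Y] [MeasurableSpace Y] {T : Y → Y}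

lemma maxInt_eq_integral_of_forall_le {φ : C(Y, ℝ)} {μ : ProbabilityMeasure Y}
    (hμ : μ ∈ InvMeas T)
    (hle : ∀ ν ∈ InvMeas T, ∫ y, φ y ∂(ν : Measure Y) ≤ ∫ y, φ y ∂(μ : Measure Y)) :
    MaxInt T φ = ∫ y, φ y ∂(μ : Measure Y) :=
  IsGreatest.csSup_eq ⟨⟨μ, hμ, rfl⟩, by rintro _ ⟨ν, hν, rfl⟩; exact hle ν hν⟩

variable [CompactSpace Y] {h : ProbabilityMeasure Y → ℝ}

lemma IsEquilib.add_integral_le {φ : C(Y, ℝ)} {μ ν : ProbabilityMeasure Y}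
    (hμ : IsEquilib T h φ μ) (hh : BddAbove (h '' InvMeas T)) (hν : ν ∈ InvMeas T) :
    h ν + ∫ y, φ y ∂(ν : Measure Y) ≤ h μ + ∫ y, φ y ∂(μ : Measure Y) :=
  hμ.2 ▸ le_csSup (bddAbove_image_add_integral hh φ) ⟨ν, hν, rfl⟩

lemma IsEquilib.integral_sub_le_div {φ : C(Y, ℝ)} {β C : ℝ} {μ ν : ProbabilityMeasure Y}
    (hβ : 0 < β) (hC : ∀ σ ∈ InvMeas T, |h σ| ≤ C) (hμ : IsEquilib T h (β • φ) μ)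
    (hν : ν ∈ InvMeas T) :
    ∫ y, φ y ∂(ν : Measure Y) - ∫ y, φ y ∂(μ : Measure Y) ≤ 2 * C / β := by
  have hh : BddAbove (h '' InvMeas T) :=
    ⟨C, by rintro _ ⟨σ, hσ, rfl⟩; exact le_of_abs_le (hC σ hσ)⟩
  have hvar := hμ.add_integral_le hh hν
  simp only [ContinuousMap.coe_smul, Pi.smul_apply, smul_eq_mul, integral_const_mul] at hvar
  have hCν := abs_le.mp (hC ν hν)
  have hCμ := abs_le.mp (hC μ hμ.1)
  rw [le_div_iff₀ hβ, sub_mul]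
  linarith

lemma integral_le_of_tendsto_isEquilib [OpensMeasurableSpace Y] {φ : C(Y, ℝ)} {C : ℝ}
    {β : ℕ → ℝ} {μ : ℕ → ProbabilityMeasure Y} {μlim ν : ProbabilityMeasure Y}
    (hβ : ∀ n, 0 < β n) (hβtop : Tendsto β atTop atTop) (hC : ∀ σ ∈ InvMeas T, |h σ| ≤ C)
    (hμ : ∀ n, IsEquilib T h (β n • φ) (μ n)) (hconv : Tendsto μ atTop (nhds μlim))
    (hν : ν ∈ InvMeas T) :
    ∫ y, φ y ∂(ν : Measure Y) ≤ ∫ y, φ y ∂(μlim : Measure Y) := by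
  have hlower : Tendsto (fun n => ∫ y, φ y ∂(ν : Measure Y) - 2 * C / β n) atTop
      (nhds (∫ y, φ y ∂(ν : Measure Y))) := by
    simpa using tendsto_const_nhds.sub (tendsto_const_nhds.div_atTop hβtop)
  have hintegral : Tendsto (fun n => ∫ y, φ y ∂(μ n : Measure Y)) atTop
      (nhds (∫ y, φ y ∂(μlim : Measure Y))) :=
    ((ProbabilityMeasure.continuous_integral_continuousMap φ).tendsto μlim).comp hconv
  refine le_of_tendsto_of_tendsto' hlower hintegral fun n => ?_
  have := (hμ n).integral_sub_le_div (hβ n) hC hν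
  linarith

end

theorem stmt18_general
    (T : X → X)
    (h : ProbabilityMeasure X → ℝ)
    (hbd : ∃ C : ℝ, ∀ μ ∈ InvMeas T, |h μ| ≤ C)
    (φ : C(X, ℝ)) (βseq : ℕ → ℝ) (hβpos : ∀ n, 0 < βseq n)
    (hβtop : Tendsto βseq atTop atTop)
    (μseq : ℕ → ProbabilityMeasure X)
    (hμeq : ∀ n, IsEquilib T h (βseq n • φ) (μseq n))
    (μinf : ProbabilityMeasure X) (hμinf : μinf ∈ InvMeas T)
    (hconv : Tendsto μseq atTop (nhds μinf)) :
    ∫ x, φ x ∂(μinf : Measure X) = MaxInt T φ := by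
  obtain ⟨C, hC⟩ := hbd
  exact (maxInt_eq_integral_of_forall_le hμinf fun ν hν =>
    integral_le_of_tendsto_isEquilib hβpos hβtop hC hμeq hconv hν).symm

theorem stmt18
    (T : X → X) (hT : Continuous T) (hne : (InvMeas T).Nonempty)
    (h : ProbabilityMeasure X → ℝ)
    (hbd : ∃ C : ℝ, ∀ μ ∈ InvMeas T, |h μ| ≤ C)
    (haff : ∀ μ ν : ProbabilityMeasure X, μ ∈ InvMeas T → ν ∈ InvMeas T →
      ∀ t : ℝ, 0 ≤ t → t ≤ 1 → ∀ σ : ProbabilityMeasure X,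
        (σ : Measure X) =
          ENNReal.ofReal t • (μ : Measure X) + ENNReal.ofReal (1 - t) • (ν : Measure X) →
        h σ = t * h μ + (1 - t) * h ν)
    (φ : C(X, ℝ)) (βseq : ℕ → ℝ) (hβpos : ∀ n, 0 < βseq n)
    (hβtop : Tendsto βseq atTop atTop)
    (μseq : ℕ → ProbabilityMeasure X)
    (hμeq : ∀ n, IsEquilib T h (βseq n • φ) (μseq n))
    (μinf : ProbabilityMeasure X) (hμinf : μinf ∈ InvMeas T)
    (hconv : Tendsto μseq atTop (nhds μinf)) :
    ∫ x, φ x ∂(μinf : Measure X) = MaxInt T φ :=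
  stmt18_general T h hbd φ βseq hβpos hβtop μseq hμeq μinf hμinf hconv
end
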